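/- For a dcpo L, the closure of a singleton {x} in the strong Scott topology is ↓x; consequently the strong Scott topology is T0 and its specialization order is the order of L. -/

import Mathlib

/-! Open sets of `σ_s(L)` are upper sets, and `(↓x)ᶜ` is strongly Scott open: if every `d ∈ D`
and `a` lie below `x`, then so does `⋁D`, so `x ∈ ↑(⋁D) ∩ ↑a`. Hence `↓x` is the least closed
set containing `x`. -/

open Set

variable {L : Type*}

/-- A directed subset: nonempty and directed under `≤`. -/
def DirSet [Preorder L] (D : Set L) : Prop := D.Nonempty ∧ DirectedOn (· ≤ ·) D

/-- Strongly Scott open sets (the family `σ^s(L)`). -/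
def StronglyScottOpen [Preorder L] [SupSet L] (U : Set L) : Prop :=
  IsUpperSet U ∧ ∀ D : Set L, DirSet D → ∀ x : L,
    Ici (sSup D) ∩ Ici x ⊆ U → ∃ d ∈ D, Ici d ∩ Ici x ⊆ U

/-- The strong Scott topology `σ_s(L)`, generated by the strongly Scott open sets. -/
def strongScott (L : Type*) [Preorder L] [SupSet L] : TopologicalSpace L :=
  TopologicalSpace.generateFrom {U | StronglyScottOpen U}

/-- Scott open sets. -/
def ScottOpen [Preorder L] [SupSet L] (U : Set L) : Prop :=
  IsUpperSet U ∧ ∀ D : Set L, DirSet D → sSup D ∈ U → (D ∩ U).Nonempty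

/-- The Scott topology `σ(L)`. -/
def scottTop (L : Type*) [Preorder L] [SupSet L] : TopologicalSpace L :=
  TopologicalSpace.generateFrom {U | ScottOpen U}

/-- The upper topology `υ(L)`. -/
def upperTop (L : Type*) [Preorder L] : TopologicalSpace L :=
  TopologicalSpace.generateFrom {U | ∃ x : L, U = (Iic x)ᶜ}

/-- The lower topology `ω(L)`. -/
def lowerTop (L : Type*) [Preorder L] : TopologicalSpace L :=
  TopologicalSpace.generateFrom {U | ∃ x : L, U = (Ici x)ᶜ}

/-- The strong way-below relation `x ≪_s y`. -/
def SWayBelow [Preorder L] (x y : L) : Prop :=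
  ∀ D : Set L, DirSet D → ∀ a : L,
    (⋂ d ∈ D, Ici d) ∩ Ici a ⊆ Ici y → ∃ d ∈ D, Ici d ∩ Ici a ⊆ Ici x

/-- The way-below relation `x ≪ y`. -/
def WayBelow [Preorder L] [SupSet L] (x y : L) : Prop :=
  ∀ D : Set L, DirSet D → y ≤ sSup D → ∃ d ∈ D, x ≤ d

/-- `X` with topology `t` is a C-space (w.r.t. the order of `L`). -/
def IsCSpace [Preorder L] (t : TopologicalSpace L) : Prop :=
  ∀ U : Set L, @IsOpen _ (t) U → ∀ x ∈ U, ∃ y ∈ U,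
    x ∈ @interior L t (Ici y) ∧ Ici y ⊆ U

/-- `L` is a strongly continuous domain. -/
def StronglyContinuousDomain (L : Type*) [Preorder L] [SupSet L] : Prop :=
  IsCSpace (strongScott L)

/-- `L` is a continuous domain. -/
def ContinuousDomain (L : Type*) [Preorder L] [SupSet L] : Prop :=
  ∀ x : L, DirSet {y | WayBelow y x} ∧ IsLUB {y | WayBelow y x} x

/-- `L` is a hypercontinuous domain. -/
def HypercontinuousDomain (L : Type*) [Preorder L] : Prop :=
  ∀ x : L, DirSet {y | x ∈ @interior L (upperTop L) (Ici y)} ∧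
    IsLUB {y | x ∈ @interior L (upperTop L) (Ici y)} x

/-- The strong Lawson topology `λ_s(L)`: common refinement of `σ_s(L)` and `ω(L)`. -/
def strongLawson (L : Type*) [Preorder L] [SupSet L] : TopologicalSpace L :=
  TopologicalSpace.generateFrom
    {U | @IsOpen _ (strongScott L) U ∨ @IsOpen _ (lowerTop L) U}

theorem isUpperSet_of_isOpen_strongScott [Preorder L] [SupSet L] {U : Set L}
    (hU : @IsOpen L (strongScott L) U) : IsUpperSet U := by
  induction hU with
  | basic V hV => exact hV.1
  | univ => exact isUpperSet_univ
  | inter _ _ _ _ ihV ihW => exact ihV.inter ihW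
  | sUnion _ _ ih => exact isUpperSet_sUnion ih

theorem Ici_inter_Ici_subset_compl_Iic_iff [Preorder L] {d a x : L} :
    Ici d ∩ Ici a ⊆ (Iic x)ᶜ ↔ ¬(d ≤ x ∧ a ≤ x) := by
  constructor
  · rintro h ⟨hdx, hax⟩
    exact h ⟨hdx, hax⟩ le_rfl
  · rintro h z ⟨hdz, haz⟩ hzx
    exact h ⟨hdz.trans hzx, haz.trans hzx⟩

theorem stronglyScottOpen_compl_Iic [CompletePartialOrder L] (x : L) :
    StronglyScottOpen (Iic x)ᶜ := by
  refine ⟨(isLowerSet_Iic x).compl, fun D hD a hsub => ?_⟩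
  simp only [Ici_inter_Ici_subset_compl_Iic_iff] at hsub ⊢
  by_contra! hbelow
  obtain ⟨d₀, hd₀⟩ := hD.1
  exact hsub ⟨hD.2.sSup_le fun d hd => (hbelow d hd).1, (hbelow d₀ hd₀).2⟩

theorem isClosed_Iic_strongScott [CompletePartialOrder L] (x : L) :
    @IsClosed L (strongScott L) (Iic x) :=
  @isOpen_compl_iff L _ (strongScott L) |>.mp <|
    .basic _ (stronglyScottOpen_compl_Iic x)

theorem closure_singleton_strongScott [CompletePartialOrder L] (x : L) :
    @closure L (strongScott L) {x} = Iic x := by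
  let := strongScott L
  refine Subset.antisymm ?_ fun y hyx => mem_closure_iff.2 fun U hU hyU => ⟨x, ?_, rfl⟩
  · exact closure_minimal (singleton_subset_iff.2 (mem_Iic.2 le_rfl)) (isClosed_Iic_strongScott x)
  · exact isUpperSet_of_isOpen_strongScott hU hyx hyU

theorem strongScott_closure_singleton [CompletePartialOrder L] :
    (∀ x : L, @closure L (strongScott L) {x} = Iic x) ∧
    (@T0Space L (strongScott L)) ∧
    (∀ x y : L, @Specializes L (strongScott L) x y ↔ y ≤ x) := by
  let := strongScott L
  have hspec (x y : L) : x ⤳ y ↔ y ≤ x := by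
    rw [specializes_iff_mem_closure, closure_singleton_strongScott, mem_Iic]
  refine ⟨closure_singleton_strongScott, ?_, hspec⟩
  rw [t0Space_iff_inseparable]
  exact fun x y hxy =>
    le_antisymm ((hspec y x).1 hxy.symm.specializes) ((hspec x y).1 hxy.specializes)
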